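/- arXiv:2510.14432 — 2 statements merged into one kernel-verified Lean document; each statement's English description precedes it below -/
import Mathlib

section
/- For every real p > 1 there exists a constant C > 0 such that for all vectors x, y in ℝ^N, ⟨|x|^{p-2} x − |y|^{p-2} y, x − y⟩ ≥ C (|x| + |y|)^{p-2} |x − y|^2. -/
/-!
Write `a = ‖x‖`, `b = ‖y‖` and `s = ⟪x, y⟫`. Both sides of the inequality are affine in `s` and
`|s| ≤ a b`, so it suffices to check the endpoints `s = ± a b`, i.e. collinear `x` and `y`. There
the inequality becomes one of the scalar inequalities
`C (a + b)^(p-2) (a - b)² ≤ (a^(p-1) - b^(p-1)) (a - b)` and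
`C (a + b)^(p-2) (a + b)² ≤ (a^(p-1) + b^(p-1)) (a + b)`.
For `b ≤ a` the first follows from `a^(p-2) ≥ ((a + b)/2)^(p-2)` when `p ≥ 2` and from weighted
AM-GM, `b^(p-1) a^(2-p) ≤ (p-1) b + (2-p) a`, when `p ≤ 2`; the second from
`a^(p-1) + b^(p-1) ≥ max a b ^ (p-1) ≥ ((a + b)/2)^(p-1)`.
-/

open scoped RealInnerProductSpace

section Scalar

variable {p r a b c : ℝ}

lemma rpow_sub_two_mul_self (hp : 1 < p) (ha : 0 ≤ a) : a ^ (p - 2) * a = a ^ (p - 1) := by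
  rw [← Real.rpow_add_one' ha (by linarith)]
  ring_nf

lemma div_two_rpow (hc : 0 ≤ c) (r : ℝ) : (c / 2) ^ r = 2 ^ (-r) * c ^ r := by
  rw [Real.div_rpow hc zero_le_two, Real.rpow_neg zero_le_two]
  ring

lemma two_rpow_mul_add_rpow_le_rpow_sub_rpow_of_two_le (hp : 2 ≤ p) (hb : 0 ≤ b) (hba : b ≤ a) :
    2 ^ (2 - p) * (a + b) ^ (p - 2) * (a - b) ≤ a ^ (p - 1) - b ^ (p - 1) := by
  have ha : 0 ≤ a := hb.trans hba
  have hmean : 2 ^ (2 - p) * (a + b) ^ (p - 2) ≤ a ^ (p - 2) := by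
    rw [← neg_sub p 2, ← div_two_rpow (by linarith)]
    exact Real.rpow_le_rpow (by linarith) (by linarith) (by linarith)
  have hmono : b ^ (p - 2) ≤ a ^ (p - 2) := Real.rpow_le_rpow hb hba (by linarith)
  rw [← rpow_sub_two_mul_self (by linarith) ha, ← rpow_sub_two_mul_self (by linarith) hb]
  nlinarith [mul_le_mul_of_nonneg_right hmean (sub_nonneg.2 hba),
    mul_le_mul_of_nonneg_right hmono hb]

lemma sub_one_mul_add_rpow_le_rpow_sub_rpow_of_le_two (hp₁ : 1 < p) (hp₂ : p ≤ 2) (hb : 0 ≤ b)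
    (hba : b ≤ a) : (p - 1) * (a + b) ^ (p - 2) * (a - b) ≤ a ^ (p - 1) - b ^ (p - 1) := by
  rcases (hb.trans hba).eq_or_lt with rfl | ha
  · obtain rfl : b = 0 := le_antisymm hba hb
    simp
  have hamgm : b ^ (p - 1) * a ^ (2 - p) ≤ (p - 1) * b + (2 - p) * a :=
    Real.geom_mean_le_arith_mean2_weighted (by linarith) (by linarith) hb ha.le (by ring)
  have hb_pow : b ^ (p - 1) ≤ a ^ (p - 2) * ((p - 1) * b + (2 - p) * a) := by
    calc b ^ (p - 1) = a ^ (p - 2) * (b ^ (p - 1) * a ^ (2 - p)) := by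
          rw [mul_left_comm, ← Real.rpow_add ha]; norm_num
      _ ≤ a ^ (p - 2) * ((p - 1) * b + (2 - p) * a) := by gcongr
  have hmono : (a + b) ^ (p - 2) ≤ a ^ (p - 2) :=
    Real.rpow_le_rpow_of_nonpos ha (by linarith) (by linarith)
  rw [← rpow_sub_two_mul_self hp₁ ha.le]
  nlinarith [mul_le_mul_of_nonneg_left hmono
    (mul_nonneg (sub_nonneg.2 hp₁.le) (sub_nonneg.2 hba))]

lemma two_rpow_neg_mul_add_rpow_le (hr : 0 ≤ r) (ha : 0 ≤ a) (hb : 0 ≤ b) :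
    2 ^ (-r) * (a + b) ^ r ≤ a ^ r + b ^ r := by
  rw [← div_two_rpow (add_nonneg ha hb)]
  rcases le_total b a with hba | hab
  · linarith [Real.rpow_le_rpow (by linarith) (by linarith : (a + b) / 2 ≤ a) hr,
      Real.rpow_nonneg hb r]
  · linarith [Real.rpow_le_rpow (by linarith) (by linarith : (a + b) / 2 ≤ b) hr,
      Real.rpow_nonneg ha r]

lemma add_mul_nonneg_of_abs_le {A B s : ℝ} (hpos : 0 ≤ A + B * c) (hneg : 0 ≤ A - B * c)
    (hs : |s| ≤ c) : 0 ≤ A + B * s := by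
  obtain ⟨hs_ge, hs_le⟩ := abs_le.mp hs
  rcases le_total 0 B with hB | hB <;> nlinarith

end Scalar

/-- `p - 1` is the AM-GM factor needed for `p < 2`, `2 ^ (1 - p)` the midpoint factor. -/
noncomputable def pLaplacianConst (p : ℝ) : ℝ := min (p - 1) 1 * 2 ^ (1 - p)

section PLaplacianConst

variable {p a b s : ℝ}

lemma pLaplacianConst_pos (hp : 1 < p) : 0 < pLaplacianConst p :=
  mul_pos (lt_min (by linarith) one_pos) (Real.rpow_pos_of_pos two_pos _)

lemma pLaplacianConst_le_two_rpow (p : ℝ) : pLaplacianConst p ≤ 2 ^ (1 - p) :=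
  mul_le_of_le_one_left (Real.rpow_nonneg zero_le_two _) (min_le_right _ _)

lemma pLaplacianConst_le_sub_one (hp : 1 ≤ p) : pLaplacianConst p ≤ p - 1 :=
  (mul_le_mul (min_le_left _ _) (Real.rpow_le_one_of_one_le_of_nonpos one_le_two (by linarith))
    (Real.rpow_nonneg zero_le_two _) (sub_nonneg.2 hp)).trans_eq (mul_one _)

lemma pLaplacianConst_mul_le_rpow_sub_rpow (hp : 1 < p) (hb : 0 ≤ b) (hba : b ≤ a) :
    pLaplacianConst p * (a + b) ^ (p - 2) * (a - b) ≤ a ^ (p - 1) - b ^ (p - 1) := by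
  have hab : 0 ≤ (a + b) ^ (p - 2) * (a - b) :=
    mul_nonneg (Real.rpow_nonneg (by linarith) _) (sub_nonneg.2 hba)
  rw [mul_assoc]
  rcases le_total 2 p with hp₂ | hp₂
  · have hC : pLaplacianConst p ≤ 2 ^ (2 - p) := (pLaplacianConst_le_two_rpow p).trans
      (Real.rpow_le_rpow_of_exponent_le one_le_two (by linarith))
    have := two_rpow_mul_add_rpow_le_rpow_sub_rpow_of_two_le hp₂ hb hba
    nlinarith [mul_le_mul_of_nonneg_right hC hab]
  · have := sub_one_mul_add_rpow_le_rpow_sub_rpow_of_le_two hp hp₂ hb hba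
    nlinarith [mul_le_mul_of_nonneg_right (pLaplacianConst_le_sub_one hp.le) hab]

lemma pLaplacianConst_mul_le_mul_sub (hp : 1 < p) (ha : 0 ≤ a) (hb : 0 ≤ b) :
    pLaplacianConst p * (a + b) ^ (p - 2) * (a - b) ^ 2 ≤
      (a ^ (p - 1) - b ^ (p - 1)) * (a - b) := by
  wlog hba : b ≤ a generalizing a b
  · have := this hb ha (le_of_not_ge hba)
    rw [add_comm] at this
    linarith
  rw [sq, ← mul_assoc]
  exact mul_le_mul_of_nonneg_right (pLaplacianConst_mul_le_rpow_sub_rpow hp hb hba)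
    (sub_nonneg.2 hba)

lemma pLaplacianConst_mul_le_mul_add (hp : 1 < p) (ha : 0 ≤ a) (hb : 0 ≤ b) :
    pLaplacianConst p * (a + b) ^ (p - 2) * (a + b) ^ 2 ≤
      (a ^ (p - 1) + b ^ (p - 1)) * (a + b) := by
  have hab : 0 ≤ a + b := add_nonneg ha hb
  have hsum : pLaplacianConst p * (a + b) ^ (p - 1) ≤ a ^ (p - 1) + b ^ (p - 1) := by
    calc pLaplacianConst p * (a + b) ^ (p - 1) ≤ 2 ^ (1 - p) * (a + b) ^ (p - 1) := by
          gcongr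
          exact pLaplacianConst_le_two_rpow p
      _ ≤ a ^ (p - 1) + b ^ (p - 1) := by
          rw [← neg_sub]
          exact two_rpow_neg_mul_add_rpow_le (by linarith) ha hb
  calc pLaplacianConst p * (a + b) ^ (p - 2) * (a + b) ^ 2
      = pLaplacianConst p * (a + b) ^ (p - 1) * (a + b) := by
        rw [← rpow_sub_two_mul_self hp hab]; ring
    _ ≤ (a ^ (p - 1) + b ^ (p - 1)) * (a + b) := mul_le_mul_of_nonneg_right hsum hab

lemma pLaplacianConst_mul_le_of_abs_le (hp : 1 < p) (ha : 0 ≤ a) (hb : 0 ≤ b)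
    (hs : |s| ≤ a * b) :
    pLaplacianConst p * (a + b) ^ (p - 2) * (a ^ 2 - 2 * s + b ^ 2) ≤
      a ^ (p - 2) * a ^ 2 + b ^ (p - 2) * b ^ 2 - (a ^ (p - 2) + b ^ (p - 2)) * s := by
  set K := pLaplacianConst p * (a + b) ^ (p - 2)
  have ea : a ^ (p - 2) * a = a ^ (p - 1) := rpow_sub_two_mul_self hp ha
  have eb : b ^ (p - 2) * b = b ^ (p - 1) := rpow_sub_two_mul_self hp hb
  have hsub := pLaplacianConst_mul_le_mul_sub hp ha hb
  have hadd := pLaplacianConst_mul_le_mul_add hp ha hb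
  have := add_mul_nonneg_of_abs_le
    (A := a ^ (p - 2) * a ^ 2 + b ^ (p - 2) * b ^ 2 - K * (a ^ 2 + b ^ 2))
    (B := 2 * K - a ^ (p - 2) - b ^ (p - 2)) ?_ ?_ hs
  · linarith
  · rw [← ea, ← eb] at hsub; linarith
  · rw [← ea, ← eb] at hadd; linarith

end PLaplacianConst

lemma inner_norm_rpow_smul_sub {E : Type*} [NormedAddCommGroup E] [InnerProductSpace ℝ E]
    (r : ℝ) (x y : E) :
    ⟪‖x‖ ^ r • x - ‖y‖ ^ r • y, x - y⟫ =
      ‖x‖ ^ r * ‖x‖ ^ 2 + ‖y‖ ^ r * ‖y‖ ^ 2 - (‖x‖ ^ r + ‖y‖ ^ r) * ⟪x, y⟫ := by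
  simp only [inner_sub_left, inner_sub_right, real_inner_smul_left, real_inner_self_eq_norm_sq,
    real_inner_comm y x]
  ring

theorem pLaplacianConst_mul_le_inner {E : Type*} [NormedAddCommGroup E] [InnerProductSpace ℝ E]
    {p : ℝ} (hp : 1 < p) (x y : E) :
    pLaplacianConst p * (‖x‖ + ‖y‖) ^ (p - 2) * ‖x - y‖ ^ 2 ≤
      ⟪‖x‖ ^ (p - 2) • x - ‖y‖ ^ (p - 2) • y, x - y⟫ := by
  rw [inner_norm_rpow_smul_sub, norm_sub_sq_real]
  exact pLaplacianConst_mul_le_of_abs_le hp (norm_nonneg x) (norm_nonneg y)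
    (abs_real_inner_le_norm x y)

/-- Monotonicity of the `p`-Laplacian vector field for `p > 1`:
`⟨|x|^{p-2} x − |y|^{p-2} y, x − y⟩ ≥ C (|x| + |y|)^{p-2} |x − y|²`. -/
theorem pLaplacian_monotonicity (N : ℕ) (p : ℝ) (hp : 1 < p) :
    ∃ C : ℝ, 0 < C ∧ ∀ x y : EuclideanSpace ℝ (Fin N),
      C * (‖x‖ + ‖y‖) ^ (p - 2) * ‖x - y‖ ^ 2 ≤
        inner ℝ ((‖x‖ ^ (p - 2) • x : EuclideanSpace ℝ (Fin N)) - ‖y‖ ^ (p - 2) • y)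
          (x - y) :=
  ⟨pLaplacianConst p, pLaplacianConst_pos hp, pLaplacianConst_mul_le_inner hp⟩
end

section
/- For every real p > 1 there exists a constant C > 0 such that for all vectors x, y in ℝ^N, the norm of |x|^{p-2} x − |y|^{p-2} y is at most C (|x| + |y|)^{p-2} |x − y|. -/
/-!
Write `t = p - 2 > -1`, `a = ‖x‖ ≥ b = ‖y‖` and split
`a ^ t • x - b ^ t • y = a ^ t • (x - y) + (a ^ t - b ^ t) • y`.
By homogeneity (`b = s a`) the second term is controlled by the scalar inequality
`|1 - s ^ t| s ≤ max 1 t (1 - s)` on `[0, 1]`, valid for `t > -1`, and by `a - b ≤ ‖x - y‖`.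
Finally `a ^ t ≤ 2 ^ |t| (a + b) ^ t` because `a ≤ a + b ≤ 2 a`.
-/

open Real

lemma abs_one_sub_rpow_mul_le {s t : ℝ} (hs₀ : 0 ≤ s) (hs₁ : s ≤ 1) (ht : -1 < t) :
    |1 - s ^ t| * s ≤ max 1 t * (1 - s) := by
  rcases le_or_gt 0 t with ht₀ | ht₀
  · -- Bernoulli's inequality for the exponent `max 1 t ≥ 1`
    have hK : 1 + max 1 t * (s - 1) ≤ s ^ t := calc
      1 + max 1 t * (s - 1) ≤ (1 + (s - 1)) ^ max 1 t :=
        one_add_mul_self_le_rpow_one_add (by linarith) (le_max_left _ _)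
      _ = s ^ max 1 t := by ring_nf
      _ ≤ s ^ t := rpow_le_rpow_of_exponent_ge' hs₀ hs₁ ht₀ (le_max_right _ _)
    have h₀ : 0 ≤ 1 - s ^ t := sub_nonneg.2 (rpow_le_one hs₀ hs₁ ht₀)
    rw [abs_of_nonneg h₀]
    nlinarith [mul_le_mul_of_nonneg_left hs₁ h₀]
  · rcases hs₀.eq_or_lt with rfl | hs₀
    · simp
    -- `(s ^ t - 1) * s = s ^ (t + 1) - s` and `s ^ (t + 1) ≤ 1`
    have h₁ : 1 ≤ s ^ t := one_le_rpow_of_pos_of_le_one_of_nonpos hs₀ hs₁ ht₀.le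
    have h₂ : s ^ (t + 1) ≤ 1 := rpow_le_one hs₀.le hs₁ (by linarith)
    rw [rpow_add_one hs₀.ne'] at h₂
    rw [abs_of_nonpos (by linarith)]
    nlinarith [le_max_left 1 t]

lemma abs_rpow_sub_rpow_mul_le {a b t : ℝ} (hb : 0 ≤ b) (hba : b ≤ a) (ht : -1 < t) :
    |a ^ t - b ^ t| * b ≤ max 1 t * a ^ t * (a - b) := by
  rcases (hb.trans hba).eq_or_lt with rfl | ha
  · simp [le_antisymm hba hb]
  have hs := abs_one_sub_rpow_mul_le (div_nonneg hb ha.le) ((div_le_one ha).2 hba) ht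
  have hab : b = a * (b / a) := by field_simp
  rw [hab, mul_rpow ha.le (div_nonneg hb ha.le)]
  have hat : 0 ≤ a ^ t := rpow_nonneg ha.le t
  calc |a ^ t - a ^ t * (b / a) ^ t| * (a * (b / a))
      = a ^ t * a * (|1 - (b / a) ^ t| * (b / a)) := by
        rw [← mul_one_sub, abs_mul, abs_of_nonneg hat]; ring
    _ ≤ a ^ t * a * (max 1 t * (1 - b / a)) := by gcongr
    _ = max 1 t * a ^ t * (a - a * (b / a)) := by ring

lemma rpow_le_two_rpow_abs_mul_add_rpow {a b t : ℝ} (hb : 0 ≤ b) (hba : b ≤ a) :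
    a ^ t ≤ 2 ^ |t| * (a + b) ^ t := by
  rcases (hb.trans hba).eq_or_lt with rfl | ha
  · rw [le_antisymm hba hb, add_zero]
    exact le_mul_of_one_le_left (rpow_nonneg le_rfl t) (one_le_rpow one_le_two (abs_nonneg t))
  rcases le_or_gt 0 t with ht | ht
  · calc a ^ t ≤ (a + b) ^ t := rpow_le_rpow ha.le (by linarith) ht
      _ ≤ 2 ^ |t| * (a + b) ^ t :=
        le_mul_of_one_le_left (by positivity) (one_le_rpow one_le_two (abs_nonneg t))
  · calc a ^ t ≤ ((a + b) / 2) ^ t := rpow_le_rpow_of_nonpos (by positivity) (by linarith) ht.le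
      _ = 2 ^ |t| * (a + b) ^ t := by
        rw [div_rpow (by positivity) zero_le_two, abs_of_neg ht, rpow_neg zero_le_two]; ring

section

variable {E : Type*} [NormedAddCommGroup E] [NormedSpace ℝ E] {t : ℝ}

lemma norm_rpow_smul_sub_rpow_smul_le_of_norm_le (ht : -1 < t) {x y : E} (hyx : ‖y‖ ≤ ‖x‖) :
    ‖‖x‖ ^ t • x - ‖y‖ ^ t • y‖ ≤ (1 + max 1 t) * 2 ^ |t| * (‖x‖ + ‖y‖) ^ t * ‖x - y‖ := by
  have hxt : 0 ≤ ‖x‖ ^ t := rpow_nonneg (norm_nonneg x) t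
  have hnorm : ‖x‖ - ‖y‖ ≤ ‖x - y‖ := norm_sub_norm_le x y
  calc ‖‖x‖ ^ t • x - ‖y‖ ^ t • y‖
      = ‖‖x‖ ^ t • (x - y) + (‖x‖ ^ t - ‖y‖ ^ t) • y‖ := by
        rw [smul_sub, sub_smul, sub_add_sub_cancel]
    _ ≤ ‖x‖ ^ t * ‖x - y‖ + |‖x‖ ^ t - ‖y‖ ^ t| * ‖y‖ := by
        grw [norm_add_le, norm_smul, norm_smul, Real.norm_of_nonneg hxt, Real.norm_eq_abs]
    _ ≤ ‖x‖ ^ t * ‖x - y‖ + max 1 t * ‖x‖ ^ t * (‖x‖ - ‖y‖) := by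
        grw [abs_rpow_sub_rpow_mul_le (norm_nonneg y) hyx ht]
    _ ≤ ‖x‖ ^ t * ‖x - y‖ + max 1 t * ‖x‖ ^ t * ‖x - y‖ := by grw [hnorm]
    _ = (1 + max 1 t) * ‖x‖ ^ t * ‖x - y‖ := by ring
    _ ≤ (1 + max 1 t) * (2 ^ |t| * (‖x‖ + ‖y‖) ^ t) * ‖x - y‖ := by
        grw [rpow_le_two_rpow_abs_mul_add_rpow (norm_nonneg y) hyx]
    _ = _ := by ring

lemma norm_rpow_smul_sub_rpow_smul_le (ht : -1 < t) (x y : E) :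
    ‖‖x‖ ^ t • x - ‖y‖ ^ t • y‖ ≤ (1 + max 1 t) * 2 ^ |t| * (‖x‖ + ‖y‖) ^ t * ‖x - y‖ := by
  rcases le_total ‖y‖ ‖x‖ with hyx | hxy
  · exact norm_rpow_smul_sub_rpow_smul_le_of_norm_le ht hyx
  · simpa only [norm_sub_rev, add_comm ‖y‖] using norm_rpow_smul_sub_rpow_smul_le_of_norm_le ht hxy

end

/-- Local Lipschitz-type bound for the `p`-Laplacian vector field for `p > 1`:
`| |x|^{p-2} x − |y|^{p-2} y | ≤ C (|x| + |y|)^{p-2} |x − y|`. -/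
theorem pLaplacian_continuity_bound (N : ℕ) (p : ℝ) (hp : 1 < p) :
    ∃ C : ℝ, 0 < C ∧ ∀ x y : EuclideanSpace ℝ (Fin N),
      ‖(‖x‖ ^ (p - 2) • x : EuclideanSpace ℝ (Fin N)) - ‖y‖ ^ (p - 2) • y‖ ≤
        C * (‖x‖ + ‖y‖) ^ (p - 2) * ‖x - y‖ :=
  ⟨(1 + max 1 (p - 2)) * 2 ^ |p - 2|, by positivity,
    norm_rpow_smul_sub_rpow_smul_le (by linarith)⟩
end
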